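/- arXiv:2504.00209 — 2 statements merged into one kernel-verified Lean document; each statement's English description precedes it below -/
import Mathlib

section
/- Fix μ₁ > 0, l ∈ ℕ, r ≥ 1/2, and a natural number m ≥ 1. There exists a constant c > 0 (depending only on l and μ₁) such that for all α with 0 < α ≤ μ₁² and all μ with 0 < μ ≤ μ₁, Q_l^{m,r}(α,μ)/μ ≤ m·c·α^{−1/2}. (Condition (B1) with γ = 1/2 for the iterated filter.) -/
/-!
Bernoulli's inequality gives `1 - (1 - q)^m ≤ m q`, and since `q_l ≤ 1` and `r ≥ 1/2`,
`q_l^r ≤ q_l^{1/2} = μ / √D` with `D = μ² + α (1 - (μ/μ₁)²)^l`. So `Q_l^{m,r}/μ ≤ m / √D`, and it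
remains to bound `D` below by a multiple of `α`: for `μ ≥ μ₁/2` the term `μ² ≥ μ₁²/4 ≥ α/4` does it,
for `μ < μ₁/2` the weight `(1 - (μ/μ₁)²)^l` is at least `(3/4)^l`.
-/

open Real

/-- The denominator of the weighted-II Tikhonov filter `q_l(α, μ) = μ² / D`. -/
noncomputable def weightedTikhonovDenom (μ₁ : ℝ) (l : ℕ) (α μ : ℝ) : ℝ :=
  μ ^ 2 + α * (1 - (μ / μ₁) ^ 2) ^ l

section weightedTikhonovDenom

variable {μ₁ α μ : ℝ}

lemma sq_le_weightedTikhonovDenom (hμ₁ : 0 < μ₁) (l : ℕ) (hα : 0 ≤ α) (hμ : 0 ≤ μ)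
    (hμμ₁ : μ ≤ μ₁) : μ ^ 2 ≤ weightedTikhonovDenom μ₁ l α μ := by
  have hratio : (μ / μ₁) ^ 2 ≤ 1 :=
    pow_le_one₀ (div_nonneg hμ hμ₁.le) ((div_le_one hμ₁).2 hμμ₁)
  have hweight : 0 ≤ (1 - (μ / μ₁) ^ 2) ^ l := pow_nonneg (by linarith) l
  unfold weightedTikhonovDenom
  nlinarith

lemma mul_le_weightedTikhonovDenom (hμ₁ : 0 < μ₁) (l : ℕ) (hα : 0 ≤ α) (hαμ₁ : α ≤ μ₁ ^ 2)
    (hμ : 0 ≤ μ) (hμμ₁ : μ ≤ μ₁) : α * (3 / 4) ^ l / 4 ≤ weightedTikhonovDenom μ₁ l α μ := by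
  have hsq := sq_le_weightedTikhonovDenom hμ₁ l hα hμ hμμ₁
  rcases le_or_gt (μ₁ / 2) μ with hlarge | hsmall
  · have hpow : α * (3 / 4 : ℝ) ^ l ≤ α :=
      mul_le_of_le_one_right hα (pow_le_one₀ (by norm_num) (by norm_num))
    nlinarith
  · have hratio : (μ / μ₁) ^ 2 ≤ 1 / 4 := by
      rw [div_pow, div_le_iff₀ (by positivity)]
      nlinarith
    have hweight : (3 / 4 : ℝ) ^ l ≤ (1 - (μ / μ₁) ^ 2) ^ l :=
      pow_le_pow_left₀ (by norm_num) (by linarith) l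
    have := mul_le_mul_of_nonneg_left hweight hα
    unfold weightedTikhonovDenom
    nlinarith [sq_nonneg μ, mul_nonneg hα (pow_nonneg (by norm_num : (0 : ℝ) ≤ 3 / 4) l)]

end weightedTikhonovDenom

lemma one_sub_one_sub_pow_le_mul {q : ℝ} (hq : q ≤ 2) (m : ℕ) : 1 - (1 - q) ^ m ≤ m * q := by
  have := one_add_mul_le_pow (a := -q) (by linarith) m
  rw [← sub_eq_add_neg] at this
  linarith

lemma rpow_div_rpow_le_div_sqrt {μ D r : ℝ} (hμ : 0 ≤ μ) (hμD : μ ^ 2 ≤ D) (hr : 1 / 2 ≤ r) :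
    μ ^ (2 * r) / D ^ r ≤ μ / √D := by
  have hD : 0 ≤ D := (sq_nonneg μ).trans hμD
  calc μ ^ (2 * r) / D ^ r = (μ ^ 2 / D) ^ r := by
        rw [div_rpow (sq_nonneg μ) hD, ← rpow_natCast_mul hμ]; norm_num
    _ ≤ (μ ^ 2 / D) ^ (1 / 2 : ℝ) :=
        rpow_le_rpow_of_exponent_ge' (by positivity) (div_le_one_of_le₀ hμD hD) (by norm_num) hr
    _ = μ / √D := by rw [← sqrt_eq_rpow, sqrt_div' _ hD, sqrt_sq hμ]

lemma one_sub_one_sub_rpow_pow_le {μ D r : ℝ} (hμ : 0 ≤ μ) (hμD : μ ^ 2 ≤ D) (hr : 1 / 2 ≤ r)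
    (m : ℕ) : 1 - (1 - μ ^ (2 * r) / D ^ r) ^ m ≤ m * (μ / √D) := by
  have hq := rpow_div_rpow_le_div_sqrt hμ hμD hr
  have hle_one : μ / √D ≤ 1 := div_le_one_of_le₀ (le_sqrt_of_sq_le hμD) (sqrt_nonneg D)
  exact (one_sub_one_sub_pow_le_mul (by linarith) m).trans
    (mul_le_mul_of_nonneg_left hq m.cast_nonneg)

theorem stmt_13_general (μ₁ : ℝ) (hμ₁ : 0 < μ₁) (l : ℕ) (r : ℝ) (hr : 1 / 2 ≤ r)
    (m : ℕ) :
    ∃ c : ℝ, 0 < c ∧ ∀ α : ℝ, 0 < α → α ≤ μ₁ ^ 2 → ∀ μ : ℝ, 0 < μ → μ ≤ μ₁ →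
      (1 - (1 - μ ^ (2 * r) / (μ ^ 2 + α * (1 - (μ / μ₁) ^ 2) ^ l) ^ r) ^ m) / μ
        ≤ m * c * α ^ (-(1 / 2 : ℝ)) := by
  refine ⟨2 / √((3 / 4) ^ l), by positivity, fun α hα hαμ₁ μ hμ hμμ₁ => ?_⟩
  have hlower := mul_le_weightedTikhonovDenom hμ₁ l hα.le hαμ₁ hμ.le hμμ₁
  have hsq := sq_le_weightedTikhonovDenom hμ₁ l hα.le hμ.le hμμ₁
  set D := weightedTikhonovDenom μ₁ l α μ
  calc _ ≤ m * (μ / √D) / μ :=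
        div_le_div_of_nonneg_right (one_sub_one_sub_rpow_pow_le hμ.le hsq hr m) hμ.le
    _ = m / √D := by field_simp
    _ ≤ m / √(α * (3 / 4) ^ l / 4) := by gcongr
    _ = m * (2 / √((3 / 4) ^ l)) * α ^ (-(1 / 2 : ℝ)) := by
        rw [rpow_neg hα.le, ← sqrt_eq_rpow, sqrt_div' _ (by norm_num), sqrt_mul hα.le,
          show (4 : ℝ) = 2 ^ 2 by norm_num, sqrt_sq (by norm_num)]
        field_simp

/-- For μ₁ > 0, l ∈ ℕ, r ≥ 1/2 and m ≥ 1 there is a constant c > 0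
(depending only on l and μ₁) such that for all 0 < α ≤ μ₁² and 0 < μ ≤ μ₁,
`Q_l^{m,r}(α,μ)/μ ≤ m c α^{-1/2}` (condition (B1) with γ = 1/2 for the iterated filter). -/
theorem stmt_13 (μ₁ : ℝ) (hμ₁ : 0 < μ₁) (l : ℕ) (r : ℝ) (hr : 1 / 2 ≤ r)
    (m : ℕ) (hm : 1 ≤ m) :
    ∃ c : ℝ, 0 < c ∧ ∀ α : ℝ, 0 < α → α ≤ μ₁ ^ 2 → ∀ μ : ℝ, 0 < μ → μ ≤ μ₁ →
      (1 - (1 - μ ^ (2 * r) / (μ ^ 2 + α * (1 - (μ / μ₁) ^ 2) ^ l) ^ r) ^ m) / μ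
        ≤ m * c * α ^ (-(1 / 2 : ℝ)) :=
  stmt_13_general μ₁ hμ₁ l r hr m
end

section
/- Fix μ₁ > 0, l ∈ ℕ, and r ≥ 1/2. For every α > 0 and every μ with 0 < μ ≤ μ₁, (1 − q_l^r(α,μ))·μ² ≤ max{1, r}·α. (The σ = 2 case of condition (B2) for the fractional weighted Tikhonov filter.) -/
/-!
Since `q_l^r = (q_l)^r` with `0 < q_l ≤ 1`, Bernoulli's inequality (for `r ≥ 1`) or `q ≤ q ^ r`
(for `r ≤ 1`) gives `1 - q_l^r ≤ max 1 r * (1 - q_l)`, and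
`(1 - q_l) μ² = α w μ² / (μ² + α w) ≤ α w ≤ α` where `w = (1 - (μ/μ₁)²)^l ∈ [0, 1]`.
-/

open Real

/-- The weighted-II Tikhonov filter `q_l(α, μ)`. -/
noncomputable def weightedTikhonovFilter (μ₁ : ℝ) (l : ℕ) (α μ : ℝ) : ℝ :=
  μ ^ 2 / (μ ^ 2 + α * (1 - (μ / μ₁) ^ 2) ^ l)

theorem one_sub_rpow_le_max_mul_one_sub {q : ℝ} (hq0 : 0 < q) (hq1 : q ≤ 1) (r : ℝ) :
    1 - q ^ r ≤ max 1 r * (1 - q) := by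
  rcases le_total 1 r with h1 | h1
  · have bernoulli := one_add_mul_self_le_rpow_one_add (s := q - 1) (by linarith) h1
    rw [add_sub_cancel] at bernoulli
    rw [max_eq_right h1]
    linarith
  · have hq_le : q ≤ q ^ r := by
      simpa using rpow_le_rpow_of_exponent_ge hq0 hq1 h1
    rw [max_eq_left h1]
    linarith

theorem pow_one_sub_div_sq_mem_Icc {μ₁ μ : ℝ} (hμ : 0 ≤ μ) (hμμ₁ : μ ≤ μ₁) (l : ℕ) :
    (1 - (μ / μ₁) ^ 2) ^ l ∈ Set.Icc (0 : ℝ) 1 := by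
  have hratio : (μ / μ₁) ^ 2 ≤ 1 :=
    pow_le_one₀ (div_nonneg hμ (hμ.trans hμμ₁)) (div_le_one_of_le₀ hμμ₁ (hμ.trans hμμ₁))
  exact ⟨pow_nonneg (by linarith) l,
    pow_le_one₀ (by linarith) (by linarith [sq_nonneg (μ / μ₁)])⟩

section WeightedTikhonovFilter

variable {μ₁ : ℝ} {l : ℕ} {α μ : ℝ}

theorem weightedTikhonovFilter_pos (hα : 0 ≤ α) (hμ : 0 < μ) (hμμ₁ : μ ≤ μ₁) :
    0 < weightedTikhonovFilter μ₁ l α μ := by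
  have hw := (pow_one_sub_div_sq_mem_Icc hμ.le hμμ₁ l).1
  unfold weightedTikhonovFilter
  positivity

theorem weightedTikhonovFilter_le_one (hα : 0 ≤ α) (hμ : 0 < μ) (hμμ₁ : μ ≤ μ₁) :
    weightedTikhonovFilter μ₁ l α μ ≤ 1 := by
  have hw := (pow_one_sub_div_sq_mem_Icc hμ.le hμμ₁ l).1
  unfold weightedTikhonovFilter
  rw [div_le_one (by positivity)]
  nlinarith

theorem one_sub_weightedTikhonovFilter_mul_sq_le (hα : 0 ≤ α) (hμ : 0 < μ) (hμμ₁ : μ ≤ μ₁) :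
    (1 - weightedTikhonovFilter μ₁ l α μ) * μ ^ 2 ≤ α := by
  obtain ⟨hw0, hw1⟩ := pow_one_sub_div_sq_mem_Icc hμ.le hμμ₁ l
  set w := (1 - (μ / μ₁) ^ 2) ^ l
  have hD : 0 < μ ^ 2 + α * w := by positivity
  unfold weightedTikhonovFilter
  rw [one_sub_div hD.ne', add_sub_cancel_left, div_mul_eq_mul_div, div_le_iff₀ hD]
  nlinarith [mul_nonneg (mul_nonneg hα hα) hw0, mul_le_mul_of_nonneg_left hw1 hα]

theorem weightedTikhonovFilter_rpow (hμ : 0 ≤ μ) (hD : 0 ≤ μ ^ 2 + α * (1 - (μ / μ₁) ^ 2) ^ l)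
    (r : ℝ) :
    weightedTikhonovFilter μ₁ l α μ ^ r
      = μ ^ (2 * r) / (μ ^ 2 + α * (1 - (μ / μ₁) ^ 2) ^ l) ^ r := by
  rw [weightedTikhonovFilter, div_rpow (by positivity) hD, ← rpow_natCast_mul hμ]
  norm_num

end WeightedTikhonovFilter

theorem stmt_14_general (μ₁ : ℝ) (l : ℕ) (r : ℝ)
    (α : ℝ) (hα : 0 < α) (μ : ℝ) (hμ : 0 < μ) (hμμ₁ : μ ≤ μ₁) :
    (1 - μ ^ (2 * r) / (μ ^ 2 + α * (1 - (μ / μ₁) ^ 2) ^ l) ^ r) * μ ^ 2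
      ≤ max 1 r * α := by
  set q := weightedTikhonovFilter μ₁ l α μ
  have hD : 0 ≤ μ ^ 2 + α * (1 - (μ / μ₁) ^ 2) ^ l :=
    add_nonneg (sq_nonneg μ) (mul_nonneg hα.le (pow_one_sub_div_sq_mem_Icc hμ.le hμμ₁ l).1)
  rw [← weightedTikhonovFilter_rpow hμ.le hD]
  calc (1 - q ^ r) * μ ^ 2 ≤ max 1 r * (1 - q) * μ ^ 2 :=
        mul_le_mul_of_nonneg_right
          (one_sub_rpow_le_max_mul_one_sub (weightedTikhonovFilter_pos hα.le hμ hμμ₁)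
            (weightedTikhonovFilter_le_one hα.le hμ hμμ₁) r) (sq_nonneg μ)
    _ = max 1 r * ((1 - q) * μ ^ 2) := by ring
    _ ≤ max 1 r * α :=
        mul_le_mul_of_nonneg_left (one_sub_weightedTikhonovFilter_mul_sq_le hα.le hμ hμμ₁)
          (zero_le_one.trans (le_max_left 1 r))

/-- For μ₁ > 0, l ∈ ℕ, r ≥ 1/2, α > 0 and 0 < μ ≤ μ₁,
`(1 - q_l^r(α,μ)) μ² ≤ max{1,r} α` (the σ = 2 case of condition (B2)). -/
theorem stmt_14 (μ₁ : ℝ) (hμ₁ : 0 < μ₁) (l : ℕ) (r : ℝ) (hr : 1 / 2 ≤ r)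
    (α : ℝ) (hα : 0 < α) (μ : ℝ) (hμ : 0 < μ) (hμμ₁ : μ ≤ μ₁) :
    (1 - μ ^ (2 * r) / (μ ^ 2 + α * (1 - (μ / μ₁) ^ 2) ^ l) ^ r) * μ ^ 2
      ≤ max 1 r * α :=
  stmt_14_general μ₁ l r α hα μ hμ hμμ₁
end
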